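/- Fix thresholds ε_m > 0 determined by the LRT formula ε_m = (σ_m² δ_w²/(σ_m² − δ_w²))·ln(σ_m²/δ_w²) where σ_m² = δ_w² + P·h_m for fixed channel gains h_m > 0. Then each per-sample detection probability under H₁, namely exp(−ε_m/σ_m²), is strictly increasing in the transmit power P, and each per-sample false alarm probability exp(−ε_m/δ_w²) is strictly decreasing in P. -/

import Mathlib

open Real

/-- `log t / (t-1)` is strictly decreasing on `(1,∞)`. -/
lemma g_strictAnti : StrictAntiOn (fun t : ℝ => Real.log t / (t - 1)) (Set.Ioi 1) := by
  apply strictAntiOn_of_deriv_neg (convex_Ioi 1)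
  · apply ContinuousOn.div
    · exact Real.continuousOn_log.mono (fun x hx => by
        simp only [Set.mem_Ioi] at hx; simp; linarith)
    · fun_prop
    · intro x hx; simp only [Set.mem_Ioi] at hx; intro hc; linarith [sub_eq_zero.mp hc]
  · intro x hx
    rw [interior_Ioi] at hx
    simp only [Set.mem_Ioi] at hx
    have hx0 : (0:ℝ) < x := by linarith
    have hx1 : x - 1 ≠ 0 := by intro hc; linarith [sub_eq_zero.mp hc]
    have hd : HasDerivAt (fun t : ℝ => Real.log t / (t - 1))
        ((x⁻¹ * (x - 1) - Real.log x * 1) / (x - 1) ^ 2) x := by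
      exact (Real.hasDerivAt_log hx0.ne').div ((hasDerivAt_id x).sub_const 1) hx1
    rw [hd.deriv]
    apply div_neg_of_neg_of_pos
    · have hlog : Real.log x⁻¹ < x⁻¹ - 1 :=
        Real.log_lt_sub_one_of_pos (by positivity) (by
          intro hc; apply hx.ne'; field_simp at hc; linarith)
      rw [Real.log_inv] at hlog
      have : x⁻¹ * (x - 1) = 1 - x⁻¹ := by field_simp
      rw [this]; linarith
    · positivity

/-- `t * log t / (t-1)` is strictly increasing on `(1,∞)`. -/
lemma h_strictMono : StrictMonoOn (fun t : ℝ => t * Real.log t / (t - 1)) (Set.Ioi 1) := by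
  apply strictMonoOn_of_deriv_pos (convex_Ioi 1)
  · apply ContinuousOn.div
    · exact continuousOn_id.mul (Real.continuousOn_log.mono (fun x hx => by
        simp only [Set.mem_Ioi] at hx; simp; linarith))
    · fun_prop
    · intro x hx; simp only [Set.mem_Ioi] at hx; intro hc; linarith [sub_eq_zero.mp hc]
  · intro x hx
    rw [interior_Ioi] at hx
    simp only [Set.mem_Ioi] at hx
    have hx0 : (0:ℝ) < x := by linarith
    have hx1 : x - 1 ≠ 0 := by intro hc; linarith [sub_eq_zero.mp hc]
    have hnum : HasDerivAt (fun t : ℝ => t * Real.log t) (1 * Real.log x + x * x⁻¹) x :=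
      (hasDerivAt_id x).mul (Real.hasDerivAt_log hx0.ne')
    have hd : HasDerivAt (fun t : ℝ => t * Real.log t / (t - 1))
        (((1 * Real.log x + x * x⁻¹) * (x - 1) - x * Real.log x * 1) / (x - 1) ^ 2) x :=
      hnum.div ((hasDerivAt_id x).sub_const 1) hx1
    rw [hd.deriv]
    apply div_pos
    · have hlog : Real.log x < x - 1 := Real.log_lt_sub_one_of_pos hx0 hx.ne'
      have hxx : x * x⁻¹ = 1 := mul_inv_cancel₀ hx0.ne'
      rw [hxx]
      nlinarith [Real.log_lt_sub_one_of_pos hx0 hx.ne']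
    · positivity

lemma key_eq1 (δ hm P : ℝ) (hδ : 0 < δ) (hh : 0 < hm) (hP : 0 < P) :
    -(((δ + P * hm) * δ / ((δ + P * hm) - δ)) * Real.log ((δ + P * hm) / δ)) / (δ + P * hm)
      = -(Real.log ((δ + P * hm) / δ) / ((δ + P * hm) / δ - 1)) := by
  have h1 : (δ + P * hm) - δ = P * hm := by ring
  have h2 : (δ + P * hm) / δ - 1 = P * hm / δ := by field_simp; ring
  rw [h1, h2]
  have hσ : δ + P * hm ≠ 0 := by positivity
  field_simp

lemma key_eq2 (δ hm P : ℝ) (hδ : 0 < δ) (hh : 0 < hm) (hP : 0 < P) :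
    -(((δ + P * hm) * δ / ((δ + P * hm) - δ)) * Real.log ((δ + P * hm) / δ)) / δ
      = -((δ + P * hm) / δ * Real.log ((δ + P * hm) / δ) / ((δ + P * hm) / δ - 1)) := by
  have h1 : (δ + P * hm) - δ = P * hm := by ring
  have h2 : (δ + P * hm) / δ - 1 = P * hm / δ := by field_simp; ring
  rw [h1, h2]
  field_simp

/-- With LRT thresholds `ε_m(P) = (σ_m² δ_w²/(σ_m² − δ_w²))·ln(σ_m²/δ_w²)`,
`σ_m²(P) = δ_w² + P·h_m`, the per-sample detection probability `exp(−ε_m/σ_m²)`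
is strictly increasing in the transmit power `P > 0`, and the per-sample false
alarm probability `exp(−ε_m/δ_w²)` is strictly decreasing in `P > 0`. -/
theorem per_sample_probs_monotone
    {ι : Type*} (δw2 : ℝ) (hδ : 0 < δw2) (h : ι → ℝ) (hh : ∀ m, 0 < h m) :
    ∀ m : ι,
      StrictMonoOn
        (fun P : ℝ =>
          Real.exp (-(((δw2 + P * h m) * δw2 / ((δw2 + P * h m) - δw2)) *
              Real.log ((δw2 + P * h m) / δw2)) / (δw2 + P * h m)))
        (Set.Ioi (0 : ℝ)) ∧
      StrictAntiOn
        (fun P : ℝ =>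
          Real.exp (-(((δw2 + P * h m) * δw2 / ((δw2 + P * h m) - δw2)) *
              Real.log ((δw2 + P * h m) / δw2)) / δw2))
        (Set.Ioi (0 : ℝ)) := by
  intro m
  have hm := hh m
  have tmem : ∀ P : ℝ, 0 < P → (δw2 + P * h m) / δw2 ∈ Set.Ioi (1:ℝ) := by
    intro P hP
    simp only [Set.mem_Ioi]
    rw [lt_div_iff₀ hδ]
    nlinarith
  constructor
  · intro a ha b hb hab
    simp only [Set.mem_Ioi] at ha hb
    beta_reduce
    rw [key_eq1 δw2 (h m) a hδ hm ha, key_eq1 δw2 (h m) b hδ hm hb]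
    apply Real.exp_lt_exp.mpr
    apply neg_lt_neg
    exact g_strictAnti (tmem a ha) (tmem b hb)
      (by apply div_lt_div_of_pos_right ?_ hδ; nlinarith)
  · intro a ha b hb hab
    simp only [Set.mem_Ioi] at ha hb
    beta_reduce
    rw [key_eq2 δw2 (h m) a hδ hm ha, key_eq2 δw2 (h m) b hδ hm hb]
    apply Real.exp_lt_exp.mpr
    apply neg_lt_neg
    exact h_strictMono (tmem a ha) (tmem b hb)
      (by apply div_lt_div_of_pos_right ?_ hδ; nlinarith)
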